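/- One full iteration of Slot Attention, mapping (inputs, slots) to slots' = f(slots, U(attn(inputs, slots), v(inputs))) where U is the weighted-mean aggregation and f is applied row-wise with shared parameters, satisfies: slots'(π_i inputs, π_s slots) = π_s · slots'(inputs, slots) for all permutation matrices π_i, π_s. -/

import Mathlib

/-- Row-wise softmax of a matrix. -/
noncomputable def rowSoftmax {N K : ℕ} (M : Matrix (Fin N) (Fin K) ℝ) :
    Matrix (Fin N) (Fin K) ℝ :=
  fun i j => Real.exp (M i j) / ∑ l, Real.exp (M i l)

/-- Slot Attention's attention matrix: row-wise softmax of `(1/√D) k(inputs) q(slots)ᵀ`. -/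
noncomputable def slotAttn {N K Din Ds D : ℕ}
    (kmap : (Fin Din → ℝ) →ₗ[ℝ] (Fin D → ℝ)) (qmap : (Fin Ds → ℝ) →ₗ[ℝ] (Fin D → ℝ))
    (inputs : Matrix (Fin N) (Fin Din) ℝ) (slots : Matrix (Fin K) (Fin Ds) ℝ) :
    Matrix (Fin N) (Fin K) ℝ :=
  rowSoftmax (fun i j => (1 / Real.sqrt D) * ∑ d, kmap (inputs i) d * qmap (slots j) d)

/-- Weighted-mean aggregation `U(A,w)_j = ∑_i (A_{i,j}/∑_l A_{l,j}) w_i`. -/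
noncomputable def weightedMean {N K D : ℕ} (A : Matrix (Fin N) (Fin K) ℝ)
    (w : Fin N → Fin D → ℝ) : Fin K → Fin D → ℝ :=
  fun j d => ∑ i, (A i j / ∑ l, A l j) * w i d

/-- One full Slot Attention iteration:
`slots' = f(slots, U(attn(inputs, slots), v(inputs)))` applied row-wise. -/
noncomputable def slotStep {N K Din Ds D : ℕ}
    (kmap : (Fin Din → ℝ) →ₗ[ℝ] (Fin D → ℝ)) (qmap : (Fin Ds → ℝ) →ₗ[ℝ] (Fin D → ℝ))
    (v : (Fin Din → ℝ) → (Fin D → ℝ)) (f : (Fin Ds → ℝ) → (Fin D → ℝ) → (Fin Ds → ℝ))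
    (inputs : Matrix (Fin N) (Fin Din) ℝ) (slots : Matrix (Fin K) (Fin Ds) ℝ) :
    Matrix (Fin K) (Fin Ds) ℝ :=
  fun j => f (slots j)
    (weightedMean (slotAttn kmap qmap inputs slots) (fun i => v (inputs i)) j)

/-! Every ingredient of a Slot Attention step is natural in the input and slot indices: the
attention score of a pair depends only on that input and that slot, the softmax normalises each
row over all slots and the weighted mean sums over all inputs, so a permutation of the inputs or
of the slots only reindexes these sums. -/

theorem rowSoftmax_submatrix {N N' K K' : ℕ} (M : Matrix (Fin N) (Fin K) ℝ)
    (σ : Fin N' → Fin N) (τ : Fin K' ≃ Fin K) :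
    rowSoftmax (M.submatrix σ τ) = (rowSoftmax M).submatrix σ τ := by
  ext i j
  simp only [rowSoftmax, Matrix.submatrix_apply]
  rw [Equiv.sum_comp τ fun l => Real.exp (M (σ i) l)]

theorem slotAttn_submatrix {N N' K K' Din Ds D : ℕ}
    (kmap : (Fin Din → ℝ) →ₗ[ℝ] (Fin D → ℝ)) (qmap : (Fin Ds → ℝ) →ₗ[ℝ] (Fin D → ℝ))
    (inputs : Matrix (Fin N) (Fin Din) ℝ) (slots : Matrix (Fin K) (Fin Ds) ℝ)
    (σ : Fin N' → Fin N) (τ : Fin K' ≃ Fin K) :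
    slotAttn kmap qmap (fun i => inputs (σ i)) (fun j => slots (τ j))
      = (slotAttn kmap qmap inputs slots).submatrix σ τ :=
  rowSoftmax_submatrix (fun i j => (1 / Real.sqrt D) * ∑ d, kmap (inputs i) d * qmap (slots j) d)
    σ τ

theorem weightedMean_submatrix {N N' K K' D : ℕ} (A : Matrix (Fin N) (Fin K) ℝ)
    (w : Fin N → Fin D → ℝ) (σ : Fin N' ≃ Fin N) (τ : Fin K' → Fin K) (j : Fin K') :
    weightedMean (A.submatrix σ τ) (fun i => w (σ i)) j = weightedMean A w (τ j) := by
  ext d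
  simp only [weightedMean, Matrix.submatrix_apply]
  rw [Equiv.sum_comp σ fun l => A l (τ j),
    Equiv.sum_comp σ fun i => A i (τ j) / (∑ l, A l (τ j)) * w i d]

/-- One full iteration of Slot Attention is invariant to permutations of the inputs and
equivariant under permutations of the slots:
`slots'(π_i inputs, π_s slots) = π_s · slots'(inputs, slots)`. -/
theorem slotStep_perm {N K Din Ds D : ℕ}
    (kmap : (Fin Din → ℝ) →ₗ[ℝ] (Fin D → ℝ)) (qmap : (Fin Ds → ℝ) →ₗ[ℝ] (Fin D → ℝ))
    (v : (Fin Din → ℝ) → (Fin D → ℝ)) (f : (Fin Ds → ℝ) → (Fin D → ℝ) → (Fin Ds → ℝ))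
    (inputs : Matrix (Fin N) (Fin Din) ℝ) (slots : Matrix (Fin K) (Fin Ds) ℝ)
    (πi : Equiv.Perm (Fin N)) (πs : Equiv.Perm (Fin K)) :
    slotStep kmap qmap v f (fun i => inputs (πi i)) (fun j => slots (πs j))
      = fun j => slotStep kmap qmap v f inputs slots (πs j) := by
  funext j
  simp only [slotStep]
  rw [slotAttn_submatrix, weightedMean_submatrix _ fun i => v (inputs i)]
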